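/- Define H : [0, G(r)] → [r, R] as the inverse of the restriction of G to [r,R], where G(x) = R·g(x/R) and g(t) = (√(1-t²) - t·arccos(t))/π, for 0 < r < R. Then H(y) = R + O(y^{2/3}) as y → 0+; that is, there exist constants C > 0 and δ > 0 such that R - C·y^{2/3} ≤ H(y) ≤ R for all y ∈ (0, δ). -/

import Mathlib

/-!
Since `g' t = -arccos t / π` and `arccos t ≥ √(2 (1 - t))` (from `cos θ ≥ 1 - θ² / 2`),
integrating from `t` to `1` gives `g t ≥ 2√2 / (3π) · (1 - t) ^ (3/2)`. Hence
`y = R g (x / R) ≥ a (R - x) ^ (3/2)` on `[r, R]` for some `a > 0`, i.e.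
`R - H y ≤ (y / a) ^ (2/3)`; the intermediate value theorem makes every `y ∈ (0, G r)` such
a value.
-/

noncomputable def g (t : ℝ) : ℝ := (Real.sqrt (1 - t^2) - t * Real.arccos t) / Real.pi

open Real Set

lemma g_one : g 1 = 0 := by simp [g]

lemma continuous_g : Continuous g := by
  unfold g
  fun_prop

lemma hasDerivAt_g {s : ℝ} (h1 : -1 < s) (h2 : s < 1) :
    HasDerivAt g (-arccos s / π) s := by
  have hpos : 0 < 1 - s ^ 2 := by nlinarith
  have hsqrt : HasDerivAt (fun x => √(1 - x ^ 2)) (-(2 * s) / (2 * √(1 - s ^ 2))) s := by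
    simpa using ((hasDerivAt_pow 2 s).const_sub 1).sqrt hpos.ne'
  have hmul : HasDerivAt (fun x => x * arccos x) (1 * arccos s + s * -(1 / √(1 - s ^ 2))) s :=
    (hasDerivAt_id' s).fun_mul (hasDerivAt_arccos h1.ne' h2.ne)
  refine ((hsqrt.sub hmul).div_const π).congr_deriv ?_
  have : √(1 - s ^ 2) ≠ 0 := (sqrt_pos.2 hpos).ne'
  field_simp
  ring

lemma sqrt_two_mul_one_sub_le_arccos {s : ℝ} (h1 : -1 ≤ s) (h2 : s ≤ 1) :
    √(2 * (1 - s)) ≤ arccos s := by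
  have hcos := one_sub_sq_div_two_le_cos (x := arccos s)
  rw [cos_arccos h1 h2] at hcos
  exact sqrt_le_iff.2 ⟨arccos_nonneg s, by linarith⟩

lemma mul_one_sub_rpow_le_g {t : ℝ} (h0 : -1 ≤ t) (h1 : t ≤ 1) :
    2 * √2 / (3 * π) * (1 - t) ^ (3 / 2 : ℝ) ≤ g t := by
  set φ : ℝ → ℝ := fun s => g s - 2 * √2 / (3 * π) * (1 - s) ^ (3 / 2 : ℝ)
  have hφ_deriv : ∀ s ∈ Ioo t 1, HasDerivAt φ ((√(2 * (1 - s)) - arccos s) / π) s := by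
    intro s hs
    have hp : HasDerivAt (fun x => (1 - x) ^ (3 / 2 : ℝ))
        (3 / 2 * (1 - s) ^ (3 / 2 - 1 : ℝ) * -1) s :=
      (hasDerivAt_rpow_const (Or.inr (by norm_num))).comp s ((hasDerivAt_id s).const_sub 1)
    refine ((hasDerivAt_g (by linarith [hs.1]) hs.2).sub (hp.const_mul _)).congr_deriv ?_
    rw [sqrt_mul zero_le_two, sqrt_eq_rpow (1 - s)]
    norm_num
    field_simp
    ring
  have hφ_anti : AntitoneOn φ (Icc t 1) := by
    refine antitoneOn_of_deriv_nonpos (convex_Icc t 1) ?_ ?_ ?_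
    · exact (continuous_g.sub (by fun_prop (disch := norm_num))).continuousOn
    · rw [interior_Icc]
      exact fun s hs => (hφ_deriv s hs).differentiableAt.differentiableWithinAt
    · rw [interior_Icc]
      intro s hs
      rw [(hφ_deriv s hs).deriv]
      exact div_nonpos_of_nonpos_of_nonneg
        (sub_nonpos.2 (sqrt_two_mul_one_sub_le_arccos (by linarith [hs.1]) hs.2.le)) pi_pos.le
  simpa [φ, g_one, sub_nonneg] using hφ_anti ⟨le_rfl, h1⟩ ⟨h1, le_rfl⟩ h1

lemma mul_rpow_le_mul_g_div {R x : ℝ} (hR : 0 < R) (hx₁ : -R ≤ x) (hx₂ : x ≤ R) :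
    2 * √2 / (3 * π) / √R * (R - x) ^ (3 / 2 : ℝ) ≤ R * g (x / R) := by
  have hlow := mul_one_sub_rpow_le_g (t := x / R) (by rw [le_div_iff₀ hR]; linarith)
    ((div_le_one hR).2 hx₂)
  have hR_rpow : R ^ (3 / 2 : ℝ) = R * √R := by
    rw [show (3 / 2 : ℝ) = 1 + 1 / 2 by norm_num, rpow_add hR, rpow_one, sqrt_eq_rpow]
  have hscale : 1 - x / R = (R - x) / R := by field_simp
  rw [hscale, div_rpow (by linarith) hR.le, hR_rpow] at hlow
  have : 0 < √R := sqrt_pos.2 hR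
  calc 2 * √2 / (3 * π) / √R * (R - x) ^ (3 / 2 : ℝ)
      = R * (2 * √2 / (3 * π) * ((R - x) ^ (3 / 2 : ℝ) / (R * √R))) := by field_simp
    _ ≤ R * g (x / R) := mul_le_mul_of_nonneg_left hlow hR.le

lemma le_rpow_inv_mul_rpow_inv_of_mul_rpow_le {a u y p : ℝ} (ha : 0 < a) (hu : 0 ≤ u)
    (hp : 0 < p) (h : a * u ^ p ≤ y) : u ≤ a⁻¹ ^ p⁻¹ * y ^ p⁻¹ := by
  have hy : 0 ≤ y := (mul_nonneg ha.le (rpow_nonneg hu p)).trans h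
  rw [← mul_rpow (inv_nonneg.2 ha.le) hy, le_rpow_inv_iff_of_pos hu (by positivity) hp,
    ← div_eq_inv_mul, le_div_iff₀ ha, mul_comm]
  exact h

theorem H_near_R (r R : ℝ) (hr : 0 < r) (hrR : r < R) (H : ℝ → ℝ)
    (hH : ∀ x ∈ Set.Icc r R, H (R * g (x / R)) = x) :
    ∃ C > (0:ℝ), ∃ δ > (0:ℝ), ∀ y ∈ Set.Ioo (0:ℝ) δ,
      R - C * y ^ ((2:ℝ)/3) ≤ H y ∧ H y ≤ R := by
  have hR : 0 < R := hr.trans hrR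
  set a := 2 * √2 / (3 * π) / √R
  have ha : 0 < a := by positivity
  have hbound : ∀ x ∈ Icc r R, a * (R - x) ^ (3 / 2 : ℝ) ≤ R * g (x / R) :=
    fun x hx => mul_rpow_le_mul_g_div hR (by linarith [hx.1]) hx.2
  refine ⟨a⁻¹ ^ (2 / 3 : ℝ), by positivity, R * g (r / R), ?_, ?_⟩
  · exact (mul_pos ha (rpow_pos_of_pos (sub_pos.2 hrR) _)).trans_le (hbound r ⟨le_rfl, hrR.le⟩)
  rintro y ⟨hy₀, hyδ⟩
  have hcont : ContinuousOn (fun x => R * g (x / R)) (Icc r R) := by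
    have := continuous_g; fun_prop
  obtain ⟨x, hx, rfl⟩ := intermediate_value_Icc' hrR.le hcont
    ⟨by simpa [hR.ne', g_one] using hy₀.le, hyδ.le⟩
  have hdist := le_rpow_inv_mul_rpow_inv_of_mul_rpow_le ha (sub_nonneg.2 hx.2) (by norm_num)
    (hbound x hx)
  rw [show (3 / 2 : ℝ)⁻¹ = 2 / 3 by norm_num] at hdist
  rw [hH x hx]
  exact ⟨by linarith, hx.2⟩
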